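/- Temperature scaling with temperature T > 1 strictly decreases the maximum softmax probability whenever the logits are not all equal: if P is the softmax of l and Q is the softmax of l/T with T > 1 and l is non-constant, then max_i Q_i < max_i P_i. -/

import Mathlib

/-!
The maximum of a softmax sits at a largest logit `l i₀`, both before and after
scaling by `1 / T`. There `1 / P i₀ = ∑ j, exp (l j - l i₀)`, and dividing the
non-positive exponents `l j - l i₀` by `T > 1` moves them towards `0`, strictly
for a smaller logit; so the sum grows and the top probability shrinks.
-/

open Real Finset

variable {ι : Type*} [Fintype ι]

noncomputable def softmax (l : ι → ℝ) (i : ι) : ℝ :=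
  exp (l i) / ∑ j, exp (l j)

lemma softmax_le_softmax {l : ι → ℝ} {i j : ι} (h : l i ≤ l j) :
    softmax l i ≤ softmax l j := by
  unfold softmax
  gcongr

lemma sup'_softmax_eq_of_isMaxOn {l : ι → ℝ} {i₀ : ι} (hmax : ∀ j, l j ≤ l i₀)
    (hne : (univ : Finset ι).Nonempty) :
    univ.sup' hne (softmax l) = softmax l i₀ :=
  le_antisymm (sup'_le _ _ fun j _ => softmax_le_softmax (hmax j)) (le_sup' _ (mem_univ i₀))

lemma softmax_eq_inv_sum_exp_sub (l : ι → ℝ) (i : ι) :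
    softmax l i = (∑ j, exp (l j - l i))⁻¹ := by
  simp only [softmax, exp_sub, ← sum_div, inv_div]

lemma softmax_div_lt_softmax {l : ι → ℝ} {i₀ j₀ : ι} (hmax : ∀ j, l j ≤ l i₀)
    (hlt : l j₀ < l i₀) {T : ℝ} (hT : 1 < T) :
    softmax (fun j => l j / T) i₀ < softmax l i₀ := by
  simp only [softmax_eq_inv_sum_exp_sub, ← sub_div]
  have hle : ∀ j, l j - l i₀ ≤ (l j - l i₀) / T := fun j => by
    have := div_le_self (sub_nonneg.2 (hmax j)) hT.le
    rw [← neg_sub, neg_div]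
    linarith
  have hlt' : l j₀ - l i₀ < (l j₀ - l i₀) / T := by
    have := div_lt_self (sub_pos.2 hlt) hT
    rw [← neg_sub, neg_div]
    linarith
  have hsum : ∑ j, exp (l j - l i₀) < ∑ j, exp ((l j - l i₀) / T) :=
    sum_lt_sum (fun j _ => exp_le_exp.2 (hle j)) ⟨j₀, mem_univ _, exp_lt_exp.2 hlt'⟩
  exact inv_strictAnti₀ (sum_pos (fun j _ => exp_pos _) ⟨i₀, mem_univ _⟩) hsum

theorem temp_scaling_decreases_max_general (n : ℕ) (l : Fin n → ℝ)
    (hne : (Finset.univ : Finset (Fin n)).Nonempty)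
    (hnc : ∃ i j : Fin n, l i ≠ l j) (T : ℝ) (hT : 1 < T)
    (P Q : Fin n → ℝ)
    (hP : ∀ i, P i = Real.exp (l i) / ∑ j, Real.exp (l j))
    (hQ : ∀ i, Q i = Real.exp (l i / T) / ∑ j, Real.exp (l j / T)) :
    Finset.univ.sup' hne Q < Finset.univ.sup' hne P := by
  obtain ⟨i₀, -, hi₀⟩ := exists_max_image univ l hne
  have hmax : ∀ j, l j ≤ l i₀ := fun j => hi₀ j (mem_univ j)
  obtain ⟨j₀, hj₀⟩ : ∃ j, l j < l i₀ := by
    obtain ⟨a, b, hab⟩ := hnc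
    by_contra! h
    exact hab ((le_antisymm (hmax a) (h a)).trans (le_antisymm (hmax b) (h b)).symm)
  have hmaxT : ∀ j, l j / T ≤ l i₀ / T := fun j =>
    div_le_div_of_nonneg_right (hmax j) (zero_le_one.trans hT.le)
  rw [show P = softmax l from funext hP, show Q = softmax (fun j => l j / T) from funext hQ,
    sup'_softmax_eq_of_isMaxOn hmax, sup'_softmax_eq_of_isMaxOn hmaxT]
  exact softmax_div_lt_softmax hmax hj₀ hT

/-- Temperature scaling with `T > 1` strictly decreases the maximum softmax
probability when the logits are not all equal. -/
theorem temp_scaling_decreases_max (n : ℕ) (hn : 2 ≤ n) (l : Fin n → ℝ)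
    (hne : (Finset.univ : Finset (Fin n)).Nonempty)
    (hnc : ∃ i j : Fin n, l i ≠ l j) (T : ℝ) (hT : 1 < T)
    (P Q : Fin n → ℝ)
    (hP : ∀ i, P i = Real.exp (l i) / ∑ j, Real.exp (l j))
    (hQ : ∀ i, Q i = Real.exp (l i / T) / ∑ j, Real.exp (l j / T)) :
    Finset.univ.sup' hne Q < Finset.univ.sup' hne P :=
  temp_scaling_decreases_max_general n l hne hnc T hT P Q hP hQ
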